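/- Let {D_j^λ}_{j} be a Hermitian orthonormal basis of a nontrivial (traceless) irrep V_λ ⊂ L(C^d) of dimension d_λ. For a Haar-random pure state |ψ_H⟩, the expected GFD purity satisfies E[P_λ(|ψ_H⟩⟨ψ_H|)] = d_λ/(d(d+1)); for the one-dimensional trivial irrep spanned by I/√d, E[P_λ(|ψ_H⟩⟨ψ_H|)] = 1/d. -/

import Mathlib

/-!
STATEMENT 4: For a Hermitian orthonormal basis `{D_j}_{j=1}^{d_λ}` of a nontrivial
(traceless) irrep `V_λ ⊂ L(ℂ^d)` and a Haar-random pure state `|ψ_H⟩`,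
`E[P_λ(|ψ_H⟩⟨ψ_H|)] = d_λ/(d(d+1))`; for the trivial irrep spanned by `I/√d`,
the expected purity is `1/d`.
-/

open Matrix MeasureTheory

/-- Rank-one projector `|ψ⟩⟨ψ|`. -/
noncomputable def outerProj {d : ℕ} (ψ : Fin d → ℂ) : Matrix (Fin d) (Fin d) ℂ :=
  Matrix.of fun i j => ψ i * (starRingEnd ℂ) (ψ j)

/-- GFD purity of `A` w.r.t. the Hermitian orthonormal family `D`. -/
noncomputable def gfdPurity {d dl : ℕ} (D : Fin dl → Matrix (Fin d) (Fin d) ℂ)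
    (A : Matrix (Fin d) (Fin d) ℂ) : ℝ :=
  ∑ j, Complex.normSq ((D j * A).trace)

noncomputable instance matrixMeasurableSpace {d : ℕ} : MeasurableSpace (Matrix (Fin d) (Fin d) ℂ) :=
  inferInstanceAs (MeasurableSpace ((Fin d) → (Fin d) → ℂ))

/-!
Write `ψ_U = U ψ₀` and `m(X, Y) = 𝔼[⟨ψ_U, X ψ_U⟩ ⟨ψ_U, Y ψ_U⟩]`. This is a bilinear form on
matrices, and left invariance of `μ` makes it invariant under `X ↦ Wᴴ X W` for every unitary `W`.
Diagonal phase unitaries kill `m(E_ij, E_kl)` unless `{i, k} = {j, l}`, so `m` is determined by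
`a_ik = 𝔼|ψ_i|²|ψ_k|²`. The Householder reflection sending `e_p` to `(3 e_p + 4 e_q)/5` gives
`17 a_pp = 18 a_pq + 8 a_qq`, hence `a_ik = c (1 + δ_ik)` and `m(X, Y) = c (tr X tr Y + tr (X Y))`.
Normalisation `m(1, 1) = 1` forces `c = 1/(d(d+1))`, and the purity of a traceless `D` with
`tr (Dᴴ D) = 1` is `m(D, Dᴴ) = c`.
-/

instance {d : ℕ} : BorelSpace (Matrix (Fin d) (Fin d) ℂ) :=
  inferInstanceAs (BorelSpace (Fin d → Fin d → ℂ))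

section Matrix

variable {𝕜 n : Type*} [RCLike 𝕜] [Fintype n]

lemma Matrix.star_mulVec_dotProduct_mulVec (W X : Matrix n n 𝕜) (ψ : n → 𝕜) :
    star (W *ᵥ ψ) ⬝ᵥ X *ᵥ (W *ᵥ ψ) = star ψ ⬝ᵥ (Wᴴ * X * W) *ᵥ ψ := by
  rw [star_mulVec, ← dotProduct_mulVec, mulVec_mulVec, mulVec_mulVec, Matrix.mul_assoc]

lemma Matrix.star_star_dotProduct_mulVec (X : Matrix n n 𝕜) (ψ : n → 𝕜) :
    star (star ψ ⬝ᵥ X *ᵥ ψ) = star ψ ⬝ᵥ Xᴴ *ᵥ ψ := by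
  rw [star_dotProduct, star_star, star_mulVec, dotProduct_mulVec, ← star_eq_conjTranspose]

variable [DecidableEq n]

theorem Matrix.isCompact_unitaryGroup : IsCompact (unitaryGroup n 𝕜 : Set (Matrix n n 𝕜)) := by
  refine IsCompact.of_isClosed_subset
    (isCompact_univ_pi fun _ => isCompact_univ_pi fun _ => isCompact_closedBall (0 : 𝕜) 1)
    isClosed_unitary fun U hU i _ j _ => ?_
  simpa using entry_norm_bound_of_unitary hU i j

instance : CompactSpace (unitaryGroup n 𝕜) :=
  isCompact_iff_compactSpace.mp Matrix.isCompact_unitaryGroup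

lemma Matrix.star_dotProduct_single_mulVec (ψ : n → 𝕜) (i j : n) (c : 𝕜) :
    star ψ ⬝ᵥ single i j c *ᵥ ψ = star (ψ i) * c * ψ j := by
  rw [single_mulVec, ← Pi.single, dotProduct_single, Pi.star_apply, mul_assoc]

lemma Matrix.conjTranspose_diagonal_mul_single_mul_diagonal (z : n → 𝕜) (i j : n) (c : 𝕜) :
    (diagonal z)ᴴ * single i j c * diagonal z = single i j (star (z i) * c * z j) := by
  ext a b
  simp only [diagonal_conjTranspose, mul_diagonal, diagonal_mul, single_apply]
  split_ifs <;> simp_all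

noncomputable def Matrix.householder (v : n → 𝕜) : Matrix n n 𝕜 :=
  1 - (2 / (star v ⬝ᵥ v)) • vecMulVec v (star v)

lemma Matrix.householder_conjTranspose (v : n → 𝕜) : (householder v)ᴴ = householder v := by
  have hself : star (star v ⬝ᵥ v) = star v ⬝ᵥ v := by rw [← star_dotProduct_star, star_star]
  simp [householder, conjTranspose_vecMulVec, star_div₀, hself]

lemma Matrix.householder_mul_self {v : n → 𝕜} (hv : star v ⬝ᵥ v ≠ 0) :
    householder v * householder v = 1 := by
  have hsq : vecMulVec v (star v) * vecMulVec v (star v) =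
      (star v ⬝ᵥ v) • vecMulVec v (star v) := by
    rw [vecMulVec_mul_vecMulVec, vecMulVec_smul]
  simp only [householder, sub_mul, mul_sub, one_mul, mul_one, smul_mul_smul, hsq, smul_smul]
  have : 2 / (star v ⬝ᵥ v) * (2 / (star v ⬝ᵥ v)) * (star v ⬝ᵥ v) = 2 * (2 / (star v ⬝ᵥ v)) := by
    field_simp
  rw [this, two_mul, add_smul]
  abel

lemma Matrix.householder_mem_unitaryGroup {v : n → 𝕜} (hv : star v ⬝ᵥ v ≠ 0) :
    householder v ∈ unitaryGroup n 𝕜 := by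
  rw [mem_unitaryGroup_iff', star_eq_conjTranspose, householder_conjTranspose,
    householder_mul_self hv]

end Matrix

lemma Matrix.linearMap₂_apply_eq_sum_single {R n : Type*} [CommSemiring R] [Fintype n]
    [DecidableEq n] (B : Matrix n n R →ₗ[R] Matrix n n R →ₗ[R] R) (X Y : Matrix n n R) :
    B X Y = ∑ i, ∑ j, ∑ k, ∑ l, X i j * Y k l * B (single i j 1) (single k l 1) := by
  have hsum (Z : Matrix n n R) : Z = ∑ i, ∑ j, Z i j • single i j 1 := by
    simpa [smul_single] using matrix_eq_sum_single Z
  conv_lhs => rw [hsum X]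
  simp only [map_sum, LinearMap.sum_apply, map_smul, LinearMap.smul_apply, smul_eq_mul]
  conv_lhs => rw [hsum Y]
  simp only [map_sum, map_smul, smul_eq_mul, Finset.mul_sum, mul_assoc]

lemma trace_mul_outerProj {d : ℕ} (B : Matrix (Fin d) (Fin d) ℂ) (ψ : Fin d → ℂ) :
    (B * outerProj ψ).trace = star ψ ⬝ᵥ B *ᵥ ψ := by
  simp only [outerProj, trace, diag, mul_apply, of_apply, dotProduct, mulVec, Finset.mul_sum]
  exact Finset.sum_congr rfl fun _ _ => Finset.sum_congr rfl fun _ _ => by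
    rw [Pi.star_apply, Complex.star_def]; ring

section FourthMoment

variable {d : ℕ} (μ : Measure (unitaryGroup (Fin d) ℂ)) [IsFiniteMeasure μ] (ψ₀ : Fin d → ℂ)

lemma integrable_mul_star_dotProduct_mulVec (X Y : Matrix (Fin d) (Fin d) ℂ) :
    Integrable (fun U : unitaryGroup (Fin d) ℂ =>
      (star ((U : Matrix (Fin d) (Fin d) ℂ) *ᵥ ψ₀) ⬝ᵥ X *ᵥ ((U : Matrix (Fin d) (Fin d) ℂ) *ᵥ ψ₀)) *
        (star ((U : Matrix (Fin d) (Fin d) ℂ) *ᵥ ψ₀) ⬝ᵥ Y *ᵥ ((U : Matrix (Fin d) (Fin d) ℂ) *ᵥ ψ₀))) μ :=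
  Continuous.integrable_of_hasCompactSupport (by fun_prop) (HasCompactSupport.of_compactSpace _)

noncomputable def fourthMoment : Matrix (Fin d) (Fin d) ℂ →ₗ[ℂ] Matrix (Fin d) (Fin d) ℂ →ₗ[ℂ] ℂ :=
  LinearMap.mk₂ ℂ (fun X Y => ∫ U : unitaryGroup (Fin d) ℂ,
      (star ((U : Matrix (Fin d) (Fin d) ℂ) *ᵥ ψ₀) ⬝ᵥ X *ᵥ ((U : Matrix (Fin d) (Fin d) ℂ) *ᵥ ψ₀)) *
        (star ((U : Matrix (Fin d) (Fin d) ℂ) *ᵥ ψ₀) ⬝ᵥ Y *ᵥ ((U : Matrix (Fin d) (Fin d) ℂ) *ᵥ ψ₀)) ∂μ)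
    (fun X X' Y => by
      simp only [add_mulVec, dotProduct_add, add_mul]
      exact integral_add (integrable_mul_star_dotProduct_mulVec μ ψ₀ X Y)
        (integrable_mul_star_dotProduct_mulVec μ ψ₀ X' Y))
    (fun c X Y => by
      simp only [smul_mulVec, dotProduct_smul, smul_mul_assoc]
      exact integral_smul c _)
    (fun X Y Y' => by
      simp only [add_mulVec, dotProduct_add, mul_add]
      exact integral_add (integrable_mul_star_dotProduct_mulVec μ ψ₀ X Y)
        (integrable_mul_star_dotProduct_mulVec μ ψ₀ X Y'))
    (fun c X Y => by
      simp only [smul_mulVec, dotProduct_smul, mul_smul_comm]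
      exact integral_smul c _)

noncomputable def fourthMomentDiag (i k : Fin d) : ℂ :=
  fourthMoment μ ψ₀ (single i i 1) (single k k 1)

variable {μ ψ₀}

lemma star_mulVec_dotProduct_mulVec_self_eq_one (hψ₀ : ∑ i, Complex.normSq (ψ₀ i) = 1)
    (U : unitaryGroup (Fin d) ℂ) :
    star ((U : Matrix (Fin d) (Fin d) ℂ) *ᵥ ψ₀) ⬝ᵥ ((U : Matrix (Fin d) (Fin d) ℂ) *ᵥ ψ₀) = 1 := by
  rw [star_mulVec, dotProduct_mulVec, vecMul_vecMul, ← star_eq_conjTranspose,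
    mem_unitaryGroup_iff'.mp U.2, vecMul_one]
  simp only [dotProduct, Pi.star_apply, Complex.star_def, ← Complex.normSq_eq_conj_mul_self]
  exact_mod_cast hψ₀

lemma fourthMoment_apply (X Y : Matrix (Fin d) (Fin d) ℂ) :
    fourthMoment μ ψ₀ X Y = ∫ U : unitaryGroup (Fin d) ℂ,
      (star ((U : Matrix (Fin d) (Fin d) ℂ) *ᵥ ψ₀) ⬝ᵥ X *ᵥ ((U : Matrix (Fin d) (Fin d) ℂ) *ᵥ ψ₀)) *
        (star ((U : Matrix (Fin d) (Fin d) ℂ) *ᵥ ψ₀) ⬝ᵥ Y *ᵥ ((U : Matrix (Fin d) (Fin d) ℂ) *ᵥ ψ₀)) ∂μ :=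
  rfl

lemma fourthMoment_comm (X Y : Matrix (Fin d) (Fin d) ℂ) :
    fourthMoment μ ψ₀ X Y = fourthMoment μ ψ₀ Y X := by
  simp only [fourthMoment_apply, mul_comm]

lemma fourthMoment_single_swap (i k : Fin d) :
    fourthMoment μ ψ₀ (single i k 1) (single k i 1) = fourthMomentDiag μ ψ₀ i k := by
  simp only [fourthMomentDiag, fourthMoment_apply, star_dotProduct_single_mulVec, mul_one]
  congr 1 with U
  ring

lemma fourthMoment_one_one [IsProbabilityMeasure μ] (hψ₀ : ∑ i, Complex.normSq (ψ₀ i) = 1) :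
    fourthMoment μ ψ₀ 1 1 = 1 := by
  simp [fourthMoment_apply, star_mulVec_dotProduct_mulVec_self_eq_one hψ₀]

variable [μ.IsMulLeftInvariant]

lemma fourthMoment_conj_unitary {W : Matrix (Fin d) (Fin d) ℂ} (hW : W ∈ unitaryGroup (Fin d) ℂ)
    (X Y : Matrix (Fin d) (Fin d) ℂ) :
    fourthMoment μ ψ₀ (Wᴴ * X * W) (Wᴴ * Y * W) = fourthMoment μ ψ₀ X Y := by
  symm
  rw [fourthMoment_apply, fourthMoment_apply, ← integral_mul_left_eq_self _ ⟨W, hW⟩]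
  congr 1 with U
  rw [Submonoid.coe_mul, ← mulVec_mulVec]
  exact congrArg₂ (· * ·) (star_mulVec_dotProduct_mulVec W X _) (star_mulVec_dotProduct_mulVec W Y _)

lemma fourthMoment_single_eq_phase_mul {z : Fin d → ℂ} (hz : ∀ s, star (z s) * z s = 1)
    (i j k l : Fin d) :
    fourthMoment μ ψ₀ (single i j 1) (single k l 1) =
      star (z i) * z j * (star (z k) * z l) * fourthMoment μ ψ₀ (single i j 1) (single k l 1) := by
  have hW : diagonal z ∈ unitaryGroup (Fin d) ℂ := by
    rw [mem_unitaryGroup_iff', star_eq_conjTranspose, diagonal_conjTranspose, diagonal_mul_diagonal,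
      ← diagonal_one]
    exact congrArg diagonal (funext hz)
  have hsingle (a b : Fin d) : (diagonal z)ᴴ * single a b 1 * diagonal z =
      (star (z a) * z b) • single a b (1 : ℂ) := by
    rw [conjTranspose_diagonal_mul_single_mul_diagonal, smul_single, smul_eq_mul, mul_one, mul_one]
  conv_lhs => rw [← fourthMoment_conj_unitary hW, hsingle, hsingle]
  rw [LinearMap.map_smul₂, map_smul, smul_eq_mul, smul_eq_mul]
  ring

lemma fourthMoment_single_eq_zero {i j k l : Fin d} (h : ¬((j = i ∧ l = k) ∨ (l = i ∧ j = k))) :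
    fourthMoment μ ψ₀ (single i j 1) (single k l 1) = 0 := by
  -- the phase `I` at `t` scales the moment by `I ^ (#t in (i, k) - #t in (j, l))`
  have key (t : Fin d) := fourthMoment_single_eq_phase_mul (μ := μ) (ψ₀ := ψ₀)
    (z := fun s => if s = t then Complex.I else 1)
    (fun s => by split_ifs <;> simp [Complex.conj_I]) i j k l
  by_cases hij : j = i
  · have hkl : l ≠ k := fun hkl => h (Or.inl ⟨hij, hkl⟩)
    refine (mul_left_eq_self₀.mp (key k).symm).resolve_left ?_
    by_cases hik : i = k <;> simp [hij, hkl, hik, Complex.ext_iff]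
  by_cases hil : l = i
  · have hkj : k ≠ j := fun hkj => h (Or.inr ⟨hil, hkj.symm⟩)
    refine (mul_left_eq_self₀.mp (key j).symm).resolve_left ?_
    simp [hil, hkj, Ne.symm hij, Complex.ext_iff]
  · refine (mul_left_eq_self₀.mp (key i).symm).resolve_left ?_
    by_cases hki : k = i <;> norm_num [hij, hil, hki, Complex.ext_iff]

lemma fourthMoment_single_eq (i j k l : Fin d) :
    fourthMoment μ ψ₀ (single i j 1) (single k l 1) =
      (if j = i then if l = k then fourthMomentDiag μ ψ₀ i k else 0 else 0) +
      (if l = i then if j = k then fourthMomentDiag μ ψ₀ i k else 0 else 0) -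
      (if j = i then if l = k then if k = i then fourthMomentDiag μ ψ₀ i i else 0 else 0 else 0) := by
  by_cases h : (j = i ∧ l = k) ∨ (l = i ∧ j = k)
  · rcases h with ⟨rfl, rfl⟩ | ⟨rfl, rfl⟩
    · by_cases hlj : l = j
      · subst hlj; simp [fourthMomentDiag]
      · simp [hlj, fourthMomentDiag]
    · by_cases hjl : j = l
      · subst hjl; simp [fourthMomentDiag]
      · simpa [hjl, Ne.symm hjl] using fourthMoment_single_swap l j
  · rw [fourthMoment_single_eq_zero h]
    by_cases hji : j = i <;> by_cases hlk : l = k <;> simp_all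

lemma fourthMoment_eq_diag_sum (X Y : Matrix (Fin d) (Fin d) ℂ) :
    fourthMoment μ ψ₀ X Y =
      ∑ i, ∑ k, X i i * Y k k * fourthMomentDiag μ ψ₀ i k +
        ∑ i, ∑ k, X i k * Y k i * fourthMomentDiag μ ψ₀ i k -
        ∑ i, X i i * Y i i * fourthMomentDiag μ ψ₀ i i := by
  rw [linearMap₂_apply_eq_sum_single]
  simp only [fourthMoment_single_eq, mul_add, mul_sub, Finset.sum_add_distrib, Finset.sum_sub_distrib]
  simp only [mul_ite, mul_zero, Finset.sum_ite_irrel, Finset.sum_const_zero, Finset.sum_ite_eq,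
    Finset.sum_ite_eq', Finset.mem_univ, if_true]

lemma fourthMomentDiag_relation {p q : Fin d} (hpq : p ≠ q) :
    17 * fourthMomentDiag μ ψ₀ p p = 18 * fourthMomentDiag μ ψ₀ p q + 8 * fourthMomentDiag μ ψ₀ q q := by
  set v : Fin d → ℂ := Pi.single p 1 - 2 • Pi.single q 1
  have hv : star v ⬝ᵥ v = 5 := by
    norm_num [v, dotProduct, Pi.single_apply, ite_mul, mul_ite, sub_mul, mul_sub,
      Finset.sum_sub_distrib, hpq, Ne.symm hpq, map_ofNat]
  set W := householder v
  have hrow (s : Fin d) : W p s = (if s = p then 3 / 5 else 0) + (if s = q then 4 / 5 else 0) := by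
    simp only [W, householder, hv]
    rcases eq_or_ne s p with rfl | hsp
    · norm_num [vecMulVec_apply, v, one_apply, hpq]
    · rcases eq_or_ne s q with rfl | hsq
      · norm_num [vecMulVec_apply, v, one_apply, hsp, Ne.symm hsp]
      · simp [vecMulVec_apply, v, one_apply, hsp, hsq, Ne.symm hsp]
  have hconj : Wᴴ * single p p 1 * W = of fun i k => star (W p i) * W p k := by
    ext i k
    simp [mul_apply, single_apply, ite_and]
  have key : fourthMomentDiag μ ψ₀ p p = (81 * fourthMomentDiag μ ψ₀ p p +
      288 * (fourthMomentDiag μ ψ₀ p q + fourthMomentDiag μ ψ₀ q p) +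
      256 * fourthMomentDiag μ ψ₀ q q) / 625 := by
    conv_lhs => rw [fourthMomentDiag, ← fourthMoment_conj_unitary
      (householder_mem_unitaryGroup (v := v) (by rw [hv]; norm_num)), hconj, fourthMoment_eq_diag_sum]
    simp only [hrow, star_add, RCLike.star_def, mul_add, mul_ite, add_mul, mul_zero, of_apply, ite_mul,
      zero_mul, Finset.sum_add_distrib, Finset.sum_ite_eq', Finset.mem_univ, if_true, if_false,
      map_div₀, map_ofNat, hpq, map_zero, add_zero, Ne.symm hpq, zero_add, Finset.sum_ite_irrel,
      Finset.sum_const_zero]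
    ring
  have hsymm : fourthMomentDiag μ ψ₀ q p = fourthMomentDiag μ ψ₀ p q := fourthMoment_comm _ _
  linear_combination (625 / 32 : ℂ) * key + 9 * hsymm

lemma exists_fourthMomentDiag_eq :
    ∃ c : ℂ, ∀ i k, fourthMomentDiag μ ψ₀ i k = c * (1 + if i = k then 1 else 0) := by
  rcases isEmpty_or_nonempty (Fin d) with _ | ⟨⟨p⟩⟩
  · exact ⟨0, fun i => isEmptyElim i⟩
  have hsymm (i k : Fin d) : fourthMomentDiag μ ψ₀ k i = fourthMomentDiag μ ψ₀ i k :=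
    fourthMoment_comm _ _
  have hrel {i k : Fin d} (hik : i ≠ k) := fourthMomentDiag_relation (μ := μ) (ψ₀ := ψ₀) hik
  have hdiag (i : Fin d) : fourthMomentDiag μ ψ₀ i i = fourthMomentDiag μ ψ₀ p p := by
    rcases eq_or_ne i p with rfl | hip
    · rfl
    · linear_combination (hrel hip - hrel hip.symm
        - 18 * hsymm i p) / 25
  refine ⟨fourthMomentDiag μ ψ₀ p p / 2, fun i k => ?_⟩
  split_ifs with hik
  · subst hik
    rw [hdiag]
    ring
  · rw [← hdiag i]
    linear_combination (hrel hik + 8 * hdiag k - 8 * hdiag i) / (-18)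

lemma exists_fourthMoment_eq :
    ∃ c : ℂ, ∀ X Y : Matrix (Fin d) (Fin d) ℂ,
      fourthMoment μ ψ₀ X Y = c * (X.trace * Y.trace + (X * Y).trace) := by
  obtain ⟨c, hc⟩ := exists_fourthMomentDiag_eq (μ := μ) (ψ₀ := ψ₀)
  refine ⟨c, fun X Y => ?_⟩
  have htr : X.trace * Y.trace = ∑ i, ∑ k, X i i * Y k k := Finset.sum_mul_sum _ _ _ _
  have htr_mul : (X * Y).trace = ∑ i, ∑ k, X i k * Y k i := rfl
  rw [fourthMoment_eq_diag_sum, htr, htr_mul]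
  simp only [hc, mul_add, mul_one, mul_ite, mul_zero, Finset.sum_add_distrib, Finset.sum_ite_eq,
    Finset.mem_univ, if_true, ← Finset.sum_mul]
  ring

theorem fourthMoment_eq [IsProbabilityMeasure μ] (hψ₀ : ∑ i, Complex.normSq (ψ₀ i) = 1)
    (X Y : Matrix (Fin d) (Fin d) ℂ) :
    fourthMoment μ ψ₀ X Y = (X.trace * Y.trace + (X * Y).trace) / (d * (d + 1)) := by
  obtain ⟨c, hc⟩ := exists_fourthMoment_eq (μ := μ) (ψ₀ := ψ₀)
  have hnorm : c * (d * (d + 1)) = 1 := by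
    have := hc 1 1
    rw [fourthMoment_one_one hψ₀, Matrix.mul_one, trace_one, Fintype.card_fin] at this
    linear_combination -this
  rw [hc, eq_div_iff (right_ne_zero_of_mul_eq_one hnorm)]
  linear_combination (X.trace * Y.trace + (X * Y).trace) * hnorm

end FourthMoment

lemma ofReal_gfdPurity_outerProj {d dl : ℕ} (D : Fin dl → Matrix (Fin d) (Fin d) ℂ) (ψ : Fin d → ℂ) :
    (gfdPurity D (outerProj ψ) : ℂ) = ∑ j, (star ψ ⬝ᵥ D j *ᵥ ψ) * (star ψ ⬝ᵥ (D j)ᴴ *ᵥ ψ) := by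
  simp only [gfdPurity, Complex.ofReal_sum, ← Complex.mul_conj, trace_mul_outerProj, ← Complex.star_def,
    star_star_dotProduct_mulVec]

lemma integral_gfdPurity_outerProj {d dl : ℕ} {μ : Measure (unitaryGroup (Fin d) ℂ)}
    [IsProbabilityMeasure μ] [μ.IsMulLeftInvariant] {ψ₀ : Fin d → ℂ}
    (hψ₀ : ∑ i, Complex.normSq (ψ₀ i) = 1) (D : Fin dl → Matrix (Fin d) (Fin d) ℂ) :
    ((∫ U : unitaryGroup (Fin d) ℂ, gfdPurity D (outerProj ((U : Matrix (Fin d) (Fin d) ℂ) *ᵥ ψ₀)) ∂μ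
      : ℝ) : ℂ) = ∑ j, ((D j).trace * star (D j).trace + (D j * (D j)ᴴ).trace) / (d * (d + 1)) := by
  rw [← integral_complex_ofReal]
  simp_rw [ofReal_gfdPurity_outerProj]
  rw [integral_finsetSum _ fun j _ => integrable_mul_star_dotProduct_mulVec μ ψ₀ _ _]
  refine Finset.sum_congr rfl fun j _ => ?_
  rw [← fourthMoment_apply, fourthMoment_eq hψ₀, trace_conjTranspose]

lemma gfdPurity_smul_one_outerProj {d : ℕ} (ψ : Fin d → ℂ) (hψ : star ψ ⬝ᵥ ψ = 1) :
    gfdPurity (fun _ : Fin 1 => (Real.sqrt d : ℂ)⁻¹ • (1 : Matrix (Fin d) (Fin d) ℂ)) (outerProj ψ) =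
      1 / d := by
  rw [gfdPurity, Fin.sum_univ_one, smul_mul_assoc, trace_smul, trace_mul_outerProj, one_mulVec, hψ,
    smul_eq_mul, mul_one, ← Complex.ofReal_inv, Complex.normSq_ofReal, ← Real.sqrt_inv,
    Real.mul_self_sqrt (by positivity), one_div]

theorem stmt4_general {d : ℕ}
    (μ : Measure (Matrix.unitaryGroup (Fin d) ℂ)) [IsProbabilityMeasure μ]
    (hinv : ∀ U : Matrix.unitaryGroup (Fin d) ℂ, μ.map (fun V => U * V) = μ)
    (ψ₀ : Fin d → ℂ) (hψ₀ : ∑ i, Complex.normSq (ψ₀ i) = 1) :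
    (∀ (dl : ℕ) (D : Fin dl → Matrix (Fin d) (Fin d) ℂ),
      (∀ j, (D j)ᴴ = D j) →
      (∀ j, (D j).trace = 0) →
      (∀ j j', ((D j)ᴴ * D j').trace = if j = j' then 1 else 0) →
      (∫ U : Matrix.unitaryGroup (Fin d) ℂ,
          gfdPurity D (outerProj ((U : Matrix (Fin d) (Fin d) ℂ).mulVec ψ₀)) ∂μ)
        = dl / (d * (d + 1))) ∧
    (∫ U : Matrix.unitaryGroup (Fin d) ℂ,
        gfdPurity (fun _ : Fin 1 => (Real.sqrt d : ℂ)⁻¹ • (1 : Matrix (Fin d) (Fin d) ℂ))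
          (outerProj ((U : Matrix (Fin d) (Fin d) ℂ).mulVec ψ₀)) ∂μ)
      = 1 / d := by
  have : μ.IsMulLeftInvariant := ⟨hinv⟩
  refine ⟨fun dl D _ htr hortho => Complex.ofReal_injective ?_, ?_⟩
  · have hnorm (j : Fin dl) : (D j * (D j)ᴴ).trace = 1 := by
      rw [trace_mul_comm, hortho, if_pos rfl]
    rw [integral_gfdPurity_outerProj hψ₀]
    simp [htr, hnorm, div_eq_mul_inv]
  · simp_rw [gfdPurity_smul_one_outerProj _ (star_mulVec_dotProduct_mulVec_self_eq_one hψ₀ _)]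
    simp

theorem stmt4 {d : ℕ} (hd : 0 < d)
    (μ : Measure (Matrix.unitaryGroup (Fin d) ℂ)) [IsProbabilityMeasure μ]
    (hinv : ∀ U : Matrix.unitaryGroup (Fin d) ℂ, μ.map (fun V => U * V) = μ)
    (ψ₀ : Fin d → ℂ) (hψ₀ : ∑ i, Complex.normSq (ψ₀ i) = 1) :
    (∀ (dl : ℕ) (D : Fin dl → Matrix (Fin d) (Fin d) ℂ),
      (∀ j, (D j)ᴴ = D j) →
      (∀ j, (D j).trace = 0) →
      (∀ j j', ((D j)ᴴ * D j').trace = if j = j' then 1 else 0) →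
      (∫ U : Matrix.unitaryGroup (Fin d) ℂ,
          gfdPurity D (outerProj ((U : Matrix (Fin d) (Fin d) ℂ).mulVec ψ₀)) ∂μ)
        = dl / (d * (d + 1))) ∧
    (∫ U : Matrix.unitaryGroup (Fin d) ℂ,
        gfdPurity (fun _ : Fin 1 => (Real.sqrt d : ℂ)⁻¹ • (1 : Matrix (Fin d) (Fin d) ℂ))
          (outerProj ((U : Matrix (Fin d) (Fin d) ℂ).mulVec ψ₀)) ∂μ)
      = 1 / d :=
  stmt4_general μ hinv ψ₀ hψ₀
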